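/- arXiv:1510.01848 — 2 statements merged into one kernel-verified Lean document; each statement's English description precedes it below -/
import Mathlib

section
/- Assume A = ln(S/K) + rT > 0 and set k = √(2A). Then E[Φ(d₁)] = 1/2 + (1/√(2π)) ( ∫₀^k e^{-s²/2} ds + ∫_k^∞ ( Q(σ̄₀ < σ₁(s)) + Q(σ̄₀ > σ₂(s)) ) e^{-s²/2} ds ) − (1/√(2π)) ∫_{-∞}^{-k} ( Q(σ̄₀ < σ₂(s)) − Q(σ̄₀ < σ₁(s)) ) e^{-s²/2} ds. -/
/-!
By Fubini, `E[Φ(d₁)] = (2π)^{-1/2} ∫ Q(s < d₁) e^{-s²/2} ds`. With `x = σ̄₀ √T > 0` one has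
`d₁ = A / x + x / 2 ≥ √(2A) = k`, so `Q(s < d₁) = 1` for `s < k`, which gives `1/2 + ∫₀^k`.
For `|s| ≥ k`, `s < d₁` means `x² - 2 s x + 2A > 0`, i.e. `x` lies outside the roots
`s ± √(s² - 2A) = σ₁(s) √T, σ₂(s) √T`. For `s ≤ -k` both roots are `≤ 0 < x`, so the last
integrand vanishes.
-/

open MeasureTheory Real Set

noncomputable def stdNormalCDF (x : ℝ) : ℝ :=
  (Real.sqrt (2 * Real.pi))⁻¹ * ∫ u in Set.Iio x, Real.exp (-u ^ 2 / 2)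

lemma integrable_exp_neg_sq_div_two : Integrable fun s : ℝ => exp (-s ^ 2 / 2) := by
  convert integrable_exp_neg_mul_sq (b := 1 / 2) (by norm_num) using 3
  ring

lemma integral_Iic_zero_exp_neg_sq_div_two :
    ∫ s in Iic 0, exp (-s ^ 2 / 2) = √(2 * π) / 2 := by
  have h := integral_comp_neg_Iic 0 fun s : ℝ => exp (-(1 / 2) * s ^ 2)
  rw [neg_zero, integral_gaussian_Ioi, div_div_eq_mul_div, div_one, mul_comm π] at h
  rw [← h]
  congr with s
  ring_nf

lemma integral_mul_exp_neg_sq_div_two_of_eq_one {F : ℝ → ℝ} {k : ℝ}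
    (hF : Integrable fun s => F s * exp (-s ^ 2 / 2)) (hF₁ : ∀ s < k, F s = 1) :
    ∫ s, F s * exp (-s ^ 2 / 2)
      = √(2 * π) / 2 + (∫ s in 0..k, exp (-s ^ 2 / 2))
        + ∫ s in Ioi k, F s * exp (-s ^ 2 / 2) := by
  have hg := integrable_exp_neg_sq_div_two
  have h_low : ∫ s in Iic k, F s * exp (-s ^ 2 / 2) = ∫ s in Iic k, exp (-s ^ 2 / 2) := by
    rw [integral_Iic_eq_integral_Iio, integral_Iic_eq_integral_Iio]
    exact setIntegral_congr_fun measurableSet_Iio fun s hs => by simp [hF₁ s hs]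
  rw [← intervalIntegral.integral_Iic_add_Ioi hF.integrableOn hF.integrableOn, h_low,
    ← intervalIntegral.integral_Iic_sub_Iic hg.integrableOn hg.integrableOn,
    integral_Iic_zero_exp_neg_sq_div_two]
  ring

section Fubini

variable {Ω : Type*} [MeasurableSpace Ω] {μ : Measure Ω} {X : Ω → ℝ}
  {g : ℝ → ℝ}

lemma integral_indicator_snd_lt_prodMk_right (hX : Measurable X) (s : ℝ) :
    ∫ ω, {p : Ω × ℝ | p.2 < X p.1}.indicator (fun p => g p.2) (ω, s) ∂μ
      = μ.real {ω | s < X ω} * g s :=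
  integral_indicator_const (g s) (measurableSet_lt measurable_const hX)

variable [IsFiniteMeasure μ]

lemma integrable_indicator_snd_lt (hX : Measurable X) (hg : Integrable g) :
    Integrable ({p : Ω × ℝ | p.2 < X p.1}.indicator fun p => g p.2) (μ.prod volume) :=
  (hg.comp_snd μ).indicator (measurableSet_lt measurable_snd (hX.comp measurable_fst))

lemma integrable_measureReal_lt_mul (hX : Measurable X) (hg : Integrable g) :
    Integrable fun s => μ.real {ω | s < X ω} * g s := by
  simpa only [integral_indicator_snd_lt_prodMk_right hX] using
    (integrable_indicator_snd_lt (μ := μ) hX hg).integral_prod_right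

lemma integral_setIntegral_Iio_eq (hX : Measurable X) (hg : Integrable g) :
    ∫ ω, (∫ s in Iio (X ω), g s) ∂μ = ∫ s, μ.real {ω | s < X ω} * g s := by
  have hF := integrable_indicator_snd_lt (μ := μ) hX hg
  simp only [← integral_indicator_snd_lt_prodMk_right hX, ← integral_prod_symm _ hF,
    integral_prod _ hF, ← integral_indicator measurableSet_Iio]
  rfl

lemma integral_stdNormalCDF_comp (hX : Measurable X) :
    ∫ ω, stdNormalCDF (X ω) ∂μ
      = (√(2 * π))⁻¹ * ∫ s, μ.real {ω | s < X ω} * exp (-s ^ 2 / 2) := by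
  simp only [stdNormalCDF]
  rw [integral_const_mul, integral_setIntegral_Iio_eq hX integrable_exp_neg_sq_div_two]

end Fubini

section Quadratic

variable {A s x : ℝ}

lemma lt_div_add_half_of_lt_sqrt (hA : 0 ≤ A) (hx : 0 < x) (hs : s < √(2 * A)) :
    s < A / x + x / 2 := by
  rw [div_add_div _ _ hx.ne' two_ne_zero, lt_div_iff₀ (by positivity)]
  rcases le_or_gt s 0 with hs₀ | hs₀
  · nlinarith
  · have : s ^ 2 < 2 * A := (lt_sqrt hs₀.le).1 hs
    nlinarith [sq_nonneg (x - s)]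

lemma lt_div_add_half_iff (hs : 2 * A ≤ s ^ 2) (hx : 0 < x) :
    s < A / x + x / 2 ↔ x < s - √(s ^ 2 - 2 * A) ∨ s + √(s ^ 2 - 2 * A) < x := by
  set D := √(s ^ 2 - 2 * A)
  have hD : D ^ 2 = s ^ 2 - 2 * A := sq_sqrt (by linarith)
  have hfactor : A / x + x / 2 - s = (x - (s - D)) * (x - (s + D)) / (2 * x) := by
    field_simp
    linear_combination hD
  rw [← sub_pos, hfactor, div_pos_iff_of_pos_right (by positivity), mul_pos_iff]
  constructor
  · rintro (⟨h₁, h₂⟩ | ⟨h₁, h₂⟩)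
    · exact Or.inr (by linarith)
    · exact Or.inl (by linarith)
  · have hD₀ : 0 ≤ D := sqrt_nonneg _
    rintro (h | h)
    · exact Or.inr ⟨by linarith, by linarith⟩
    · exact Or.inl ⟨by linarith, by linarith⟩

lemma add_sqrt_sq_sub_nonpos (hA : 0 ≤ A) (hs : s ≤ 0) : s + √(s ^ 2 - 2 * A) ≤ 0 := by
  have : √(s ^ 2 - 2 * A) ≤ -s := (sqrt_le_left (by linarith)).2 (by nlinarith)
  linarith

lemma add_add_sq_div_two_mul_div_eq {T : ℝ} (hT : 0 ≤ T) (a r σ : ℝ) :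
    (a + (r + σ ^ 2 / 2) * T) / (σ * √T) = (a + r * T) / (σ * √T) + σ * √T / 2 := by
  rcases eq_or_ne σ 0 with rfl | hσ
  · simp
  rcases hT.eq_or_lt with rfl | hT
  · simp
  have := sqrt_pos.2 hT
  field_simp
  rw [sq_sqrt hT.le]
  ring

lemma sqrt_sq_mul_sub_mul_div {T : ℝ} (hT : 0 ≤ T) :
    √(s ^ 2 * T - 2 * T * A) / T = √(s ^ 2 - 2 * A) / √T := by
  rw [show s ^ 2 * T - 2 * T * A = T * (s ^ 2 - 2 * A) by ring, sqrt_mul hT,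
    mul_div_right_comm, sqrt_div_self', one_div, div_eq_inv_mul]

end Quadratic

section LevelSets

variable {Ω : Type*} [MeasurableSpace Ω] {μ : Measure Ω} {σ : Ω → ℝ} {A u s : ℝ}

lemma measureReal_lt_div_add_half_eq_one [IsProbabilityMeasure μ] (hA : 0 ≤ A) (hu : 0 < u)
    (hσ : ∀ᵐ ω ∂μ, 0 < σ ω) (hs : s < √(2 * A)) :
    μ.real {ω | s < A / (σ ω * u) + σ ω * u / 2} = 1 := by
  rw [← probReal_univ (μ := μ)]
  refine measureReal_congr (ae_eq_univ.2 (measure_eq_zero_iff_ae_notMem.2 ?_))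
  filter_upwards [hσ] with ω hω hω'
  exact hω' (lt_div_add_half_of_lt_sqrt hA (mul_pos hω hu) hs)

lemma measureReal_lt_div_add_half_eq_add [IsFiniteMeasure μ] (hσm : Measurable σ) (hu : 0 < u)
    (hσ : ∀ᵐ ω ∂μ, 0 < σ ω) (hs : 2 * A ≤ s ^ 2) :
    μ.real {ω | s < A / (σ ω * u) + σ ω * u / 2}
      = μ.real {ω | σ ω < (s - √(s ^ 2 - 2 * A)) / u}
        + μ.real {ω | (s + √(s ^ 2 - 2 * A)) / u < σ ω} := by
  have hdisj : Disjoint {ω | σ ω < (s - √(s ^ 2 - 2 * A)) / u}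
      {ω | (s + √(s ^ 2 - 2 * A)) / u < σ ω} := by
    refine disjoint_left.2 fun ω h₁ h₂ => ?_
    have : (s - √(s ^ 2 - 2 * A)) / u ≤ (s + √(s ^ 2 - 2 * A)) / u := by
      gcongr
      linarith [sqrt_nonneg (s ^ 2 - 2 * A)]
    exact lt_asymm (h₁.trans_le this) h₂
  rw [← measureReal_union hdisj (measurableSet_lt measurable_const hσm)]
  refine measureReal_congr (Filter.eventuallyEq_set.2 ?_)
  filter_upwards [hσ] with ω hω
  simp only [mem_ofPred_eq, mem_union, lt_div_add_half_iff hs (mul_pos hω hu), lt_div_iff₀ hu,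
    div_lt_iff₀ hu]

lemma measureReal_lt_eq_zero_of_nonpos [IsFiniteMeasure μ] (hσ : ∀ᵐ ω ∂μ, 0 < σ ω) {t : ℝ}
    (ht : t ≤ 0) : μ.real {ω | σ ω < t} = 0 := by
  rw [measureReal_eq_zero_iff, measure_eq_zero_iff_ae_notMem]
  exact hσ.mono fun _ hω h => lt_asymm hω (h.trans_le ht)

end LevelSets

theorem expectation_Phi_d1_pos_general
    {Ω : Type*} [MeasurableSpace Ω] (Q : Measure Ω) [IsProbabilityMeasure Q]
    (c : ℝ) (hc : 0 < c) (σ₀ : Ω → ℝ) (hσ₀ : Measurable σ₀)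
    (hσ₀c : ∀ᵐ ω ∂Q, c ≤ σ₀ ω)
    (S K T r : ℝ) (hT : 0 < T)
    (A : ℝ) (hA : A = Real.log (S / K) + r * T) (hApos : 0 < A)
    (k : ℝ) (hk : k = Real.sqrt (2 * A))
    (d₁ : Ω → ℝ)
    (hd₁ : d₁ = fun ω =>
      (Real.log (S / K) + (r + σ₀ ω ^ 2 / 2) * T) / (σ₀ ω * Real.sqrt T))
    (σ₁ σ₂ : ℝ → ℝ)
    (hσ₁ : ∀ s, σ₁ s = s / Real.sqrt T - Real.sqrt (s ^ 2 * T - 2 * T * A) / T)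
    (hσ₂ : ∀ s, σ₂ s = s / Real.sqrt T + Real.sqrt (s ^ 2 * T - 2 * T * A) / T) :
    ∫ ω, stdNormalCDF (d₁ ω) ∂Q
      = 1 / 2
        + (Real.sqrt (2 * Real.pi))⁻¹
            * ((∫ s in (0 : ℝ)..k, Real.exp (-s ^ 2 / 2))
              + ∫ s in Set.Ioi k,
                  ((Q {ω | σ₀ ω < σ₁ s}).toReal + (Q {ω | σ₀ ω > σ₂ s}).toReal)
                    * Real.exp (-s ^ 2 / 2))
        - (Real.sqrt (2 * Real.pi))⁻¹
            * ∫ s in Set.Iio (-k),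
                ((Q {ω | σ₀ ω < σ₂ s}).toReal - (Q {ω | σ₀ ω < σ₁ s}).toReal)
                  * Real.exp (-s ^ 2 / 2) := by
  have hu : 0 < √T := sqrt_pos.2 hT
  have hσ₀pos : ∀ᵐ ω ∂Q, 0 < σ₀ ω := hσ₀c.mono fun _ h => hc.trans_le h
  have hd₁' : d₁ = fun ω => A / (σ₀ ω * √T) + σ₀ ω * √T / 2 := by
    subst hd₁ hA
    exact funext fun ω => add_add_sq_div_two_mul_div_eq hT.le _ _ _
  have hσ₁' (s : ℝ) : σ₁ s = (s - √(s ^ 2 - 2 * A)) / √T := by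
    rw [hσ₁, sqrt_sq_mul_sub_mul_div hT.le, sub_div]
  have hσ₂' (s : ℝ) : σ₂ s = (s + √(s ^ 2 - 2 * A)) / √T := by
    rw [hσ₂, sqrt_sq_mul_sub_mul_div hT.le, add_div]
  have h_low (s : ℝ) (hs : s < k) : Q.real {ω | s < d₁ ω} = 1 :=
    hd₁' ▸ measureReal_lt_div_add_half_eq_one hApos.le hu hσ₀pos (hk ▸ hs)
  have h_high : EqOn (fun s => Q.real {ω | s < d₁ ω} * exp (-s ^ 2 / 2))
      (fun s => (Q.real {ω | σ₀ ω < σ₁ s} + Q.real {ω | σ₀ ω > σ₂ s}) * exp (-s ^ 2 / 2))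
      (Ioi k) := fun s hs => by
    have hs' : 2 * A ≤ s ^ 2 := (lt_sq_of_sqrt_lt (hk ▸ hs)).le
    simp only [hd₁', measureReal_lt_div_add_half_eq_add hσ₀ hu hσ₀pos hs', hσ₁', hσ₂',
      gt_iff_lt]
  have h_neg : EqOn
      (fun s => (Q.real {ω | σ₀ ω < σ₂ s} - Q.real {ω | σ₀ ω < σ₁ s}) * exp (-s ^ 2 / 2)) 0
      (Iio (-k)) := fun s hs => by
    have hs₀ : s ≤ 0 := by linarith [hs.out, hk ▸ sqrt_nonneg (2 * A)]
    have h₁ : σ₁ s ≤ 0 := hσ₁' s ▸ div_nonpos_of_nonpos_of_nonneg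
      (by linarith [sqrt_nonneg (s ^ 2 - 2 * A)]) hu.le
    have h₂ : σ₂ s ≤ 0 := hσ₂' s ▸ div_nonpos_of_nonpos_of_nonneg
      (add_sqrt_sq_sub_nonpos hApos.le hs₀) hu.le
    simp [measureReal_lt_eq_zero_of_nonpos hσ₀pos h₁,
      measureReal_lt_eq_zero_of_nonpos hσ₀pos h₂]
  have hd₁m : Measurable d₁ := hd₁' ▸ by fun_prop
  simp only [← measureReal_def]
  rw [integral_stdNormalCDF_comp hd₁m, integral_mul_exp_neg_sq_div_two_of_eq_one
    (integrable_measureReal_lt_mul hd₁m integrable_exp_neg_sq_div_two) h_low,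
    setIntegral_congr_fun measurableSet_Ioi h_high,
    setIntegral_congr_fun measurableSet_Iio h_neg]
  simp only [Pi.zero_apply, integral_zero]
  field_simp
  ring

/-- If `A = ln(S/K) + rT > 0` and `k = √(2A)`, then
`E[Φ(d₁)] = 1/2 + (1/√(2π)) (∫₀^k e^{-s²/2} ds
  + ∫_k^∞ (Q(σ̄₀ < σ₁(s)) + Q(σ̄₀ > σ₂(s))) e^{-s²/2} ds)
  − (1/√(2π)) ∫_{-∞}^{-k} (Q(σ̄₀ < σ₂(s)) − Q(σ̄₀ < σ₁(s))) e^{-s²/2} ds`. -/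
theorem expectation_Phi_d1_pos
    {Ω : Type*} [MeasurableSpace Ω] (Q : Measure Ω) [IsProbabilityMeasure Q]
    (c : ℝ) (hc : 0 < c) (σ₀ : Ω → ℝ) (hσ₀ : Measurable σ₀)
    (hσ₀c : ∀ᵐ ω ∂Q, c ≤ σ₀ ω)
    (S K T r : ℝ) (hS : 0 < S) (hK : 0 < K) (hT : 0 < T)
    (A : ℝ) (hA : A = Real.log (S / K) + r * T) (hApos : 0 < A)
    (k : ℝ) (hk : k = Real.sqrt (2 * A))
    (d₁ : Ω → ℝ)
    (hd₁ : d₁ = fun ω =>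
      (Real.log (S / K) + (r + σ₀ ω ^ 2 / 2) * T) / (σ₀ ω * Real.sqrt T))
    (σ₁ σ₂ : ℝ → ℝ)
    (hσ₁ : ∀ s, σ₁ s = s / Real.sqrt T - Real.sqrt (s ^ 2 * T - 2 * T * A) / T)
    (hσ₂ : ∀ s, σ₂ s = s / Real.sqrt T + Real.sqrt (s ^ 2 * T - 2 * T * A) / T) :
    ∫ ω, stdNormalCDF (d₁ ω) ∂Q
      = 1 / 2
        + (Real.sqrt (2 * Real.pi))⁻¹
            * ((∫ s in (0 : ℝ)..k, Real.exp (-s ^ 2 / 2))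
              + ∫ s in Set.Ioi k,
                  ((Q {ω | σ₀ ω < σ₁ s}).toReal + (Q {ω | σ₀ ω > σ₂ s}).toReal)
                    * Real.exp (-s ^ 2 / 2))
        - (Real.sqrt (2 * Real.pi))⁻¹
            * ∫ s in Set.Iio (-k),
                ((Q {ω | σ₀ ω < σ₂ s}).toReal - (Q {ω | σ₀ ω < σ₁ s}).toReal)
                  * Real.exp (-s ^ 2 / 2) :=
  expectation_Phi_d1_pos_general Q c hc σ₀ hσ₀ hσ₀c S K T r hT A hA hApos k hk d₁ hd₁ σ₁ σ₂ hσ₁ hσ₂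
end

section
/- Let Z be a standard normal random variable, and let S > 0, K > 0, T > 0, r ∈ ℝ and v > 0 be constants. Then E[ ( S·exp( rT − v²T/2 + v√T·Z ) − K )⁺ ] = S e^{rT} Φ(d₁) − K Φ(d₂), where d₁ = (ln(S/K) + (r + v²/2)T)/(v√T) and d₂ = d₁ − v√T. -/
open MeasureTheory ProbabilityTheory
open scoped ENNReal NNReal

private lemma bs_shift_Iic (f : ℝ → ℝ) (a b : ℝ) :
    ∫ x in Set.Iic a, f (x - b) = ∫ x in Set.Iic (a - b), f x := by
  rw [← integral_indicator measurableSet_Iic, ← integral_indicator measurableSet_Iic]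
  rw [← integral_sub_right_eq_self (μ := volume) ((Set.Iic (a - b)).indicator f) b]
  congr 1
  ext x
  simp [Set.indicator_apply, sub_le_sub_iff_right]

private lemma bs_int_gauss_Ioi (m c : ℝ) :
    ∫ x in Set.Ioi c, gaussianPDFReal m 1 x = stdNormalCDF (m - c) := by
  unfold stdNormalCDF gaussianPDFReal
  simp only [NNReal.coe_one, mul_one, one_div]
  rw [integral_const_mul]
  congr 1
  have h1 : ∫ x in Set.Ioi c, Real.exp (-(x - m) ^ 2 / 2)
      = ∫ x in Set.Iic (-c), Real.exp (-(x + m) ^ 2 / 2) := by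
    rw [← integral_comp_neg_Ioi]
    congr 1
    ext x
    ring_nf
  rw [h1]
  have h3 := bs_shift_Iic (fun u => Real.exp (-u ^ 2 / 2)) (-c) (-m)
  rw [show (-c) - (-m) = m - c by ring] at h3
  have h4 : ∫ x in Set.Iic (-c), Real.exp (-(x + m) ^ 2 / 2)
      = ∫ x in Set.Iic (m - c), Real.exp (-x ^ 2 / 2) := by
    rw [← h3]; congr 1; ext x; ring_nf
  rw [h4, integral_Iic_eq_integral_Iio]

/-- Black–Scholes formula: if `Z` is standard normal, `S, K, T, v > 0`, then
`E[(S exp(rT − v²T/2 + v√T Z) − K)⁺] = S e^{rT} Φ(d₁) − K Φ(d₂)` where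
`d₁ = (ln(S/K) + (r + v²/2)T)/(v√T)` and `d₂ = d₁ − v√T`. -/
theorem blackScholes_call_price
    {Ω : Type*} [MeasurableSpace Ω] (P : Measure Ω) [IsProbabilityMeasure P]
    (Z : Ω → ℝ) (hZ : Measurable Z)
    (hlaw : P.map Z = gaussianReal 0 1)
    (S K T r v : ℝ) (hS : 0 < S) (hK : 0 < K) (hT : 0 < T) (hv : 0 < v)
    (d₁ d₂ : ℝ)
    (hd₁ : d₁ = (Real.log (S / K) + (r + v ^ 2 / 2) * T) / (v * Real.sqrt T))
    (hd₂ : d₂ = d₁ - v * Real.sqrt T) :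
    ∫ ω, max (S * Real.exp (r * T - v ^ 2 * T / 2 + v * Real.sqrt T * Z ω) - K) 0 ∂P
      = S * Real.exp (r * T) * stdNormalCDF d₁ - K * stdNormalCDF d₂ := by
  set σ := v * Real.sqrt T with hσdef
  have hσ : 0 < σ := mul_pos hv (Real.sqrt_pos.2 hT)
  have hσ2 : σ ^ 2 = v ^ 2 * T := by
    rw [hσdef, mul_pow, Real.sq_sqrt hT.le]
  set C := r * T - v ^ 2 * T / 2 with hCdef
  set g : ℝ → ℝ := fun x => max (S * Real.exp (C + σ * x) - K) 0 with hgdef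
  have hgm : Measurable g := by
    apply Measurable.max _ measurable_const
    exact ((measurable_const.add (measurable_id'.const_mul σ)).exp.const_mul S).sub
      measurable_const
  -- Step 1: push forward to the Gaussian law
  have step1 : ∫ ω, max (S * Real.exp (C + σ * Z ω) - K) 0 ∂P
      = ∫ x, g x ∂(gaussianReal 0 1) := by
    rw [← hlaw, integral_map hZ.aemeasurable hgm.aestronglyMeasurable]
  rw [show (∫ ω, max (S * Real.exp (r * T - v ^ 2 * T / 2 + σ * Z ω) - K) 0 ∂P)
      = ∫ ω, max (S * Real.exp (C + σ * Z ω) - K) 0 ∂P from rfl, step1]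
  -- Step 2: express against the Lebesgue density
  have hdens : (gaussianReal 0 1 : Measure ℝ)
      = volume.withDensity (fun x => ((gaussianPDFReal 0 1 x).toNNReal : ℝ≥0∞)) := by
    rw [gaussianReal_of_var_ne_zero 0 one_ne_zero]; rfl
  rw [hdens, integral_withDensity_eq_integral_smul
    ((measurable_gaussianPDFReal 0 1).real_toNNReal) g]
  have hsmul : ∀ x : ℝ, (gaussianPDFReal 0 1 x).toNNReal • g x
      = gaussianPDFReal 0 1 x * g x := by
    intro x
    rw [NNReal.smul_def, Real.coe_toNNReal _ (gaussianPDFReal_nonneg 0 1 x), smul_eq_mul]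
  simp only [hsmul]
  -- algebraic facts
  have hd₁σ : d₁ * σ = Real.log S - Real.log K + r * T + σ ^ 2 / 2 := by
    rw [hd₁, div_mul_cancel₀ _ hσ.ne', Real.log_div hS.ne' hK.ne', hσ2]
    ring
  have hlogKS : C + σ * (-d₂) = Real.log (K / S) := by
    rw [Real.log_div hK.ne' hS.ne', hd₂, hCdef, ← hσ2]
    linear_combination -hd₁σ
  have hiff : ∀ x : ℝ, S * Real.exp (C + σ * x) ≤ K ↔ x ≤ -d₂ := by
    intro x
    rw [← Real.exp_log hK, ← Real.exp_log hS, ← Real.exp_add, Real.exp_le_exp]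
    rw [Real.log_div hK.ne' hS.ne'] at hlogKS
    constructor
    · intro h
      have : σ * x ≤ σ * (-d₂) := by linarith
      exact le_of_mul_le_mul_left this hσ
    · intro h
      have : σ * x ≤ σ * (-d₂) := mul_le_mul_of_nonneg_left h hσ.le
      linarith
  have hsq : ∀ x : ℝ, Real.exp (σ * x) * gaussianPDFReal 0 1 x
      = Real.exp (σ ^ 2 / 2) * gaussianPDFReal σ 1 x := by
    intro x
    simp only [gaussianPDFReal, NNReal.coe_one, mul_one, sub_zero, one_div]
    rw [mul_left_comm, mul_left_comm (Real.exp (σ ^ 2 / 2)), ← Real.exp_add, ← Real.exp_add]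
    congr 1
    ring_nf
  have hErT : Real.exp (r * T) = Real.exp C * Real.exp (σ ^ 2 / 2) := by
    rw [← Real.exp_add]
    congr 1
    rw [hCdef, hσ2]
    ring
  -- Step 3: pointwise identity with an indicator
  have key : ∀ x : ℝ, gaussianPDFReal 0 1 x * g x
      = Set.indicator (Set.Ioi (-d₂))
          (fun x => (S * Real.exp (r * T)) * gaussianPDFReal σ 1 x
            - K * gaussianPDFReal 0 1 x) x := by
    intro x
    by_cases hx : x ∈ Set.Ioi (-d₂)
    · rw [Set.indicator_of_mem hx]
      have hgt : K ≤ S * Real.exp (C + σ * x) := by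
        by_contra h
        exact absurd ((hiff x).1 (le_of_lt (not_le.1 h))) (not_le.2 hx)
      rw [hgdef]
      simp only
      rw [max_eq_left (by linarith), Real.exp_add, hErT]
      linear_combination (S * Real.exp C) * hsq x
    · rw [Set.indicator_of_notMem hx, hgdef]
      simp only
      have hle : x ≤ -d₂ := not_lt.1 hx
      have : S * Real.exp (C + σ * x) - K ≤ 0 := by
        have := (hiff x).2 hle
        linarith
      rw [max_eq_right this, mul_zero]
  simp only [key]
  -- Step 4: compute the two Gaussian integrals
  rw [integral_indicator measurableSet_Ioi]
  have h1 : Integrable (fun x => (S * Real.exp (r * T)) * gaussianPDFReal σ 1 x)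
      (volume.restrict (Set.Ioi (-d₂))) :=
    ((integrable_gaussianPDFReal σ 1).const_mul _).restrict
  have h2 : Integrable (fun x => K * gaussianPDFReal 0 1 x)
      (volume.restrict (Set.Ioi (-d₂))) :=
    ((integrable_gaussianPDFReal 0 1).const_mul _).restrict
  rw [integral_sub h1 h2, integral_const_mul, integral_const_mul,
    bs_int_gauss_Ioi, bs_int_gauss_Ioi,
    show σ - -d₂ = d₁ by rw [hd₂]; ring,
    show (0 : ℝ) - -d₂ = d₂ by ring]
end
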